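/- For a connected k-uniform hypergraph H and vertex u ∈ V(H), the path tree T(H,u) is a k-uniform hypertree, i.e., it is connected and contains no cycle. -/

import Mathlib

open scoped Classical

structure FinHypergraph (α : Type*) [DecidableEq α] where
  verts : Finset α
  edges : Finset (Finset α)
  edge_sub : ∀ e ∈ edges, e ⊆ verts

namespace FinHypergraph

variable {α : Type*} [DecidableEq α] {β : Type*} [DecidableEq β]

/-- `H` is `k`-uniform: every edge has exactly `k` vertices. -/
def IsUniform (H : FinHypergraph α) (k : ℕ) : Prop := ∀ e ∈ H.edges, e.card = k

/-- The degree of a vertex: the number of edges containing it. -/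
def degree (H : FinHypergraph α) (v : α) : ℕ := (H.edges.filter (fun e => v ∈ e)).card

/-- `Δ` is the maximum degree of `H`. -/
def maxDegree (H : FinHypergraph α) (Δ : ℕ) : Prop :=
  (∀ v, H.degree v ≤ Δ) ∧ ∃ v ∈ H.verts, H.degree v = Δ

/-- Two vertices are adjacent if some edge contains both. -/
def Adj (H : FinHypergraph α) (a b : α) : Prop := ∃ e ∈ H.edges, a ∈ e ∧ b ∈ e

/-- `H` is connected: nonempty and any two vertices joined by a walk. -/
def Connected (H : FinHypergraph α) : Prop :=
  H.verts.Nonempty ∧ ∀ a ∈ H.verts, ∀ b ∈ H.verts, Relation.ReflTransGen H.Adj a b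

/-- A matching: a set of pairwise disjoint edges of `H`. -/
def IsMatching (H : FinHypergraph α) (M : Finset (Finset α)) : Prop :=
  M ⊆ H.edges ∧ ∀ e ∈ M, ∀ f ∈ M, e ≠ f → Disjoint e f

/-- `p(H, r)`: the number of matchings of size `r`. -/
noncomputable def matchCount (H : FinHypergraph α) (r : ℕ) : ℕ :=
  (H.edges.powerset.filter (fun M => M.card = r ∧ H.IsMatching M)).card

/-- The matching polynomial `μ(H,x) = Σ_r (-1)^r p(H,r) x^{|V| - k r}`. -/
noncomputable def matchingPoly (H : FinHypergraph α) (k : ℕ) : Polynomial ℝ :=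
  ∑ r ∈ Finset.range (H.edges.card + 1),
    Polynomial.C ((-1 : ℝ) ^ r * (H.matchCount r : ℝ)) * Polynomial.X ^ (H.verts.card - k * r)

/-- Deleting a set of vertices: induced sub-hypergraph on `verts \ W`. -/
def delete (H : FinHypergraph α) (W : Finset α) : FinHypergraph α where
  verts := H.verts \ W
  edges := H.edges.filter (fun e => Disjoint e W)
  edge_sub := by
    intro e he
    simp only [Finset.mem_filter] at he
    exact Finset.subset_sdiff.mpr ⟨H.edge_sub e he.1, he.2⟩

/-- The set of moduli of the complex zeros of a real polynomial. -/
def rootModuli (p : Polynomial ℝ) : Set ℝ :=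
  {m | ∃ z : ℂ, (Polynomial.aeval z) p = 0 ∧ ‖z‖ = m}

/-- `λ(H)`: the maximum modulus of the complex zeros of the matching polynomial. -/
noncomputable def lam (H : FinHypergraph α) (k : ℕ) : ℝ :=
  sSup (rootModuli (H.matchingPoly k))


/-! ### Paths, cycles and path trees -/

variable {α : Type*} [DecidableEq α]

/-- The sequence of vertices `v₀ = u, v₁, …` visited by a walk encoded as a list of
(edge, next-vertex) steps. -/
def vertAt (u : α) (p : List (Finset α × α)) (t : ℕ) : α :=
  (u :: p.map Prod.snd).getD t u

/-- The terminal vertex of a walk starting at `u`. -/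
def lastVert (u : α) (p : List (Finset α × α)) : α :=
  (p.map Prod.snd).getLastD u

/-- `p` is a nonbacktracking path in `H` starting at `u`: the vertices and the edges
are distinct, consecutive conditions `v_{t}, v_{t+1} ∈ e_{t+1}` hold, and edge
`e_{t+1}` contains none of the vertices `v₀, …, v_{t-1}`. -/
def IsNBPath (H : FinHypergraph α) (u : α) (p : List (Finset α × α)) : Prop :=
  u ∈ H.verts ∧ (p.map Prod.fst).Nodup ∧ (u :: p.map Prod.snd).Nodup ∧
  ∀ t < p.length,
    (p.getD t (∅, u)).1 ∈ H.edges ∧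
    vertAt u p t ∈ (p.getD t (∅, u)).1 ∧
    (p.getD t (∅, u)).2 ∈ (p.getD t (∅, u)).1 ∧
    ∀ i < t, vertAt u p i ∉ (p.getD t (∅, u)).1

/-- `H` contains a cycle: a closed walk of positive length with distinct edges,
distinct vertices except that the first and last coincide, and consecutive vertices
distinct. -/
def HasCycle (H : FinHypergraph α) : Prop :=
  ∃ (u : α) (p : List (Finset α × α)), u ∈ H.verts ∧ p ≠ [] ∧
    (p.map Prod.fst).Nodup ∧ (p.map Prod.snd).Nodup ∧ lastVert u p = u ∧
    ∀ t < p.length,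
      (p.getD t (∅, u)).1 ∈ H.edges ∧
      vertAt u p t ∈ (p.getD t (∅, u)).1 ∧
      (p.getD t (∅, u)).2 ∈ (p.getD t (∅, u)).1 ∧
      vertAt u p t ≠ (p.getD t (∅, u)).2

/-- A `k`-uniform hypertree: connected and acyclic. -/
def IsHypertree (H : FinHypergraph α) (k : ℕ) : Prop :=
  H.IsUniform k ∧ H.Connected ∧ ¬ H.HasCycle

/-- The vertex set of the path tree: all nonbacktracking paths in `H` starting at `u`. -/
noncomputable def pathTreeVerts (H : FinHypergraph α) (u : α) [Fintype α] :
    Finset (List (Finset α × α)) :=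
  Set.Finite.toFinset (s := {p | H.IsNBPath u p}) (by
    apply Set.Finite.subset
      (List.finite_length_le (Finset α × α) (Fintype.card (Finset α)))
    intro p hp
    have hnd : (p.map Prod.fst).Nodup := hp.2.1
    have := hnd.length_le_card
    simpa using this)

/-- The path tree `T(H,u)` of `H` with respect to `u`: vertices are the
nonbacktracking paths starting at `u`; a path `p₁` together with its continuations
through a common terminal edge `e` (one for each vertex of `e` other than the terminal
vertex of `p₁`) forms an edge. -/
noncomputable def pathTree (H : FinHypergraph α) (u : α) [Fintype α] :
    FinHypergraph (List (Finset α × α)) where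
  verts := pathTreeVerts H u
  edges := ((pathTreeVerts H u ×ˢ H.edges).filter
      (fun q => (q.2.erase (lastVert u q.1)).Nonempty ∧
        ∀ v ∈ q.2.erase (lastVert u q.1), H.IsNBPath u (q.1 ++ [(q.2, v)]))).image
      (fun q => insert q.1 ((q.2.erase (lastVert u q.1)).image
        (fun v => q.1 ++ [(q.2, v)])))
  edge_sub := by
    intro E hE
    simp only [Finset.mem_image, Finset.mem_filter, Finset.mem_product] at hE
    obtain ⟨q, ⟨⟨hq1, _⟩, _, hall⟩, rfl⟩ := hE
    intro p hp
    simp only [Finset.mem_insert, Finset.mem_image] at hp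
    rcases hp with rfl | ⟨v, hv, rfl⟩
    · exact hq1
    · unfold pathTreeVerts
      rw [Set.Finite.mem_toFinset]
      exact hall v hv

/-- Isomorphism of hypergraphs: a bijection between the vertex sets carrying edges
onto edges. -/
def Isom {β : Type*} [DecidableEq β] (H₁ : FinHypergraph α) (H₂ : FinHypergraph β) : Prop :=
  ∃ f : α → β, Set.BijOn f ↑H₁.verts ↑H₂.verts ∧
    (∀ e ∈ H₁.edges, e.image f ∈ H₂.edges) ∧
    (∀ E ∈ H₂.edges, ∃ e ∈ H₁.edges, e.image f = E)

end FinHypergraph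

/-!
Every edge of `T(H,u)` consists of a path `q` and its one-step continuations through an edge
`e ∋ v_last(q)`, so it has `|e| = k` vertices. Every nonbacktracking path is reached from the
empty path by adding one step at a time, and each such step is an edge of `T(H,u)`, so the path
tree is connected. Finally, a path is a non-shortest member of at most one edge of `T(H,u)`,
namely the edge of its prefix and its last edge of `H`; on a cycle of `T(H,u)` the longest path
would be a non-shortest member of two distinct cycle edges.
-/

namespace FinHypergraph

variable {α : Type*}

lemma vertAt_succ (u : α) (p : List (Finset α × α)) {t : ℕ} (ht : t < p.length) :
    vertAt u p (t + 1) = (p.getD t (∅, u)).2 := by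
  simp [vertAt, List.getElem?_eq_getElem ht]

lemma vertAt_length (u : α) (p : List (Finset α × α)) :
    vertAt u p p.length = lastVert u p := by
  grind [vertAt, lastVert]

lemma vertAt_append (u : α) (p r : List (Finset α × α)) {t : ℕ} (ht : t ≤ p.length) :
    vertAt u (p ++ r) t = vertAt u p t := by
  grind [vertAt]

lemma exists_vertAt_eq_of_mem {u x : α} {q : List (Finset α × α)}
    (hx : x ∈ u :: q.map Prod.snd) : ∃ i ≤ q.length, vertAt u q i = x := by
  obtain ⟨i, hi, rfl⟩ := List.mem_iff_getElem.mp hx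
  exact ⟨i, by simpa [Nat.lt_succ_iff] using hi, List.getD_eq_getElem _ _ hi⟩

lemma notMem_cons_map_snd_of_mem {u w : α} {q : List (Finset α × α)} {e : Finset α}
    (hearlier : ∀ i < q.length, vertAt u q i ∉ e) (hw : w ∈ e) (hwq : w ≠ lastVert u q) :
    w ∉ u :: q.map Prod.snd := by
  intro hmem
  obtain ⟨i, hi, rfl⟩ := exists_vertAt_eq_of_mem hmem
  rcases hi.lt_or_eq with hlt | rfl
  · exact hearlier i hlt hw
  · exact hwq (vertAt_length u q)

variable [DecidableEq α]

lemma isNBPath_concat_iff {H : FinHypergraph α} {u : α} {q : List (Finset α × α)}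
    {e : Finset α} {w : α} :
    H.IsNBPath u (q ++ [(e, w)]) ↔
      H.IsNBPath u q ∧ e ∈ H.edges ∧ lastVert u q ∈ e ∧ w ∈ e ∧
      w ∉ u :: q.map Prod.snd ∧ e ∉ q.map Prod.fst ∧ ∀ i < q.length, vertAt u q i ∉ e := by
  have hlast : (q ++ [(e, w)]).getD q.length (∅, u) = (e, w) := by grind
  simp only [IsNBPath, List.length_append, List.length_singleton, Nat.forall_lt_succ_right,
    hlast, List.map_append, List.map_cons, List.map_nil, ← List.cons_append, List.nodup_append,
    List.nodup_singleton, List.mem_singleton]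
  grind [vertAt_length, vertAt_append, List.getD_append]

instance (H : FinHypergraph α) : Std.Symm H.Adj :=
  ⟨fun _ _ ⟨E, hE, ha, hb⟩ => ⟨E, hE, hb, ha⟩⟩

/-- On a cycle, the vertex of maximal rank lies in two distinct cycle edges, each together
with a cycle neighbour of no larger rank. -/
lemma not_hasCycle_of_rank (H : FinHypergraph α) (rank : α → ℕ)
    (hrank : ∀ E ∈ H.edges, ∀ F ∈ H.edges, ∀ P ∈ E, P ∈ F →
      (∃ R ∈ E, R ≠ P ∧ rank R ≤ rank P) → (∃ R ∈ F, R ≠ P ∧ rank R ≤ rank P) → E = F) :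
    ¬ H.HasCycle := by
  rintro ⟨P₀, p, -, hp, hedges, -, hclosed, hstep⟩
  set n := p.length
  set v := vertAt P₀ p
  set E := fun t => (p.getD t (∅, P₀)).1
  have hvn : v n = v 0 := (vertAt_length P₀ p).trans hclosed
  have hcycle : ∀ t < n, E t ∈ H.edges ∧ v t ∈ E t ∧ v (t + 1) ∈ E t ∧ v t ≠ v (t + 1) := by
    intro t ht
    obtain ⟨hE, hv, hv', hne⟩ := hstep t ht
    rw [← vertAt_succ P₀ p ht] at hv' hne
    exact ⟨hE, hv, hv', hne⟩
  have hE_inj : ∀ s < n, ∀ t < n, E s = E t → s = t := fun s hs t ht hst => by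
    simp only [E, List.getD_eq_getElem _ _ hs, List.getD_eq_getElem _ _ ht] at hst
    exact (hedges.getElem_inj_iff (hi := by simpa using hs) (hj := by simpa using ht)).mp
      (by simpa using hst)
  have hn : 2 ≤ n := by
    by_contra! hn
    have hn1 : n = 1 := by have := List.length_pos_iff.mpr hp; omega
    rw [hn1] at hvn
    exact (hcycle 0 (by omega)).2.2.2 hvn.symm
  obtain ⟨t₀, ht₀, hmax⟩ :=
    Finset.exists_max_image (Finset.Icc 1 n) (rank ∘ v) ⟨n, by simp; omega⟩
  rw [Finset.mem_Icc] at ht₀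
  have hmax' : ∀ t ≤ n, rank (v t) ≤ rank (v t₀) := by
    intro t ht
    rcases Nat.eq_zero_or_pos t with rfl | hpos
    · exact hvn ▸ hmax n (by simp; omega)
    · exact hmax t (by simp; omega)
  obtain ⟨j, hj, hjt₀, hvj⟩ : ∃ j < n, j ≠ t₀ - 1 ∧ v j = v t₀ := by
    rcases ht₀.2.lt_or_eq with hlt | rfl
    · exact ⟨t₀, hlt, by omega, rfl⟩
    · exact ⟨0, by omega, by omega, hvn.symm⟩
  obtain ⟨hE_in, hprev, hv_in, hne_in⟩ := hcycle (t₀ - 1) (by omega)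
  obtain ⟨hE_out, hv_out, hnext, hne_out⟩ := hcycle j hj
  rw [Nat.sub_add_cancel ht₀.1] at hv_in hne_in
  rw [hvj] at hv_out hne_out
  have hsame : E (t₀ - 1) = E j := hrank _ hE_in _ hE_out _ hv_in hv_out
    ⟨_, hprev, hne_in, hmax' _ (by omega)⟩ ⟨_, hnext, hne_out.symm, hmax' _ (by omega)⟩
  exact hjt₀ (hE_inj _ (by omega) _ hj hsame).symm

def pathTreeEdge (u : α) (q : List (Finset α × α)) (e : Finset α) :
    Finset (List (Finset α × α)) :=
  insert q ((e.erase (lastVert u q)).image fun v => q ++ [(e, v)])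

lemma card_pathTreeEdge {u : α} {q : List (Finset α × α)} {e : Finset α}
    (hq : lastVert u q ∈ e) : (pathTreeEdge u q e).card = e.card := by
  have hq_notMem : q ∉ (e.erase (lastVert u q)).image fun v => q ++ [(e, v)] := by
    simp only [Finset.mem_image, not_exists, not_and]
    intro v _ h
    simpa using congrArg List.length h
  have hinj : Function.Injective fun v => q ++ [(e, v)] := fun v w h => by
    simpa using List.append_cancel_left h
  rw [pathTreeEdge, Finset.card_insert_of_notMem hq_notMem, Finset.card_image_of_injective _ hinj,
    Finset.card_erase_add_one hq]

lemma eq_pathTreeEdge_dropLast {u : α} {q P R : List (Finset α × α)} {e : Finset α}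
    (hP : P ∈ pathTreeEdge u q e) (hR : R ∈ pathTreeEdge u q e) (hRP : R ≠ P)
    (hlen : R.length ≤ P.length) :
    pathTreeEdge u q e = pathTreeEdge u P.dropLast (P.getLastD (∅, u)).1 := by
  simp only [pathTreeEdge, Finset.mem_insert, Finset.mem_image] at hP hR
  rcases hP with rfl | ⟨w, -, rfl⟩
  · rcases hR with rfl | ⟨v, -, rfl⟩
    · exact absurd rfl hRP
    · simp at hlen
  · simp [pathTreeEdge]

section PathTree

variable [Fintype α] {H : FinHypergraph α} {u : α}

lemma mem_pathTreeVerts {p : List (Finset α × α)} :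
    p ∈ H.pathTreeVerts u ↔ H.IsNBPath u p :=
  Set.Finite.mem_toFinset _

lemma mem_pathTree_edges {E : Finset (List (Finset α × α))} :
    E ∈ (H.pathTree u).edges ↔ ∃ q e, H.IsNBPath u q ∧ e ∈ H.edges ∧
      (e.erase (lastVert u q)).Nonempty ∧
      (∀ v ∈ e.erase (lastVert u q), H.IsNBPath u (q ++ [(e, v)])) ∧
      E = pathTreeEdge u q e := by
  simp only [pathTree, pathTreeEdge, Finset.mem_image, Finset.mem_filter, Finset.mem_product,
    mem_pathTreeVerts, Prod.exists, eq_comm (a := E)]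
  grind

lemma pathTree_isUniform {k : ℕ} (hH : H.IsUniform k) : (H.pathTree u).IsUniform k := by
  intro E hE
  obtain ⟨q, e, -, he, ⟨v, hv⟩, hcont, rfl⟩ := mem_pathTree_edges.mp hE
  rw [card_pathTreeEdge (isNBPath_concat_iff.mp (hcont v hv)).2.2.1, hH e he]

lemma pathTree_adj_concat {q : List (Finset α × α)} {e : Finset α} {v : α}
    (h : H.IsNBPath u (q ++ [(e, v)])) : (H.pathTree u).Adj q (q ++ [(e, v)]) := by
  obtain ⟨hq, he, hlast, hv, hvq, heq, hearlier⟩ := isNBPath_concat_iff.mp h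
  have hv' : v ∈ e.erase (lastVert u q) :=
    Finset.mem_erase.mpr ⟨fun h => hvq (h ▸ List.getLastD_mem_cons), hv⟩
  refine ⟨pathTreeEdge u q e, mem_pathTree_edges.mpr ⟨q, e, hq, he, ⟨v, hv'⟩, ?_, rfl⟩,
    Finset.mem_insert_self _ _, Finset.mem_insert_of_mem (Finset.mem_image_of_mem _ hv')⟩
  intro w hw
  obtain ⟨hwq, hw⟩ := Finset.mem_erase.mp hw
  exact isNBPath_concat_iff.mpr
    ⟨hq, he, hlast, hw, notMem_cons_map_snd_of_mem hearlier hw hwq, heq, hearlier⟩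

lemma reflTransGen_pathTree_adj_nil {p : List (Finset α × α)} (hp : H.IsNBPath u p) :
    Relation.ReflTransGen (H.pathTree u).Adj [] p := by
  induction p using List.reverseRecOn with
  | nil => exact .refl
  | append_singleton q x ih =>
    exact (ih (isNBPath_concat_iff.mp hp).1).tail (pathTree_adj_concat hp)

lemma pathTree_connected (hu : u ∈ H.verts) : (H.pathTree u).Connected := by
  refine ⟨⟨[], mem_pathTreeVerts.mpr ⟨hu, by simp, by simp, by simp⟩⟩, fun p hp q hq => ?_⟩
  exact (Std.Symm.symm _ _ (reflTransGen_pathTree_adj_nil (mem_pathTreeVerts.mp hp))).trans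
    (reflTransGen_pathTree_adj_nil (mem_pathTreeVerts.mp hq))

lemma not_hasCycle_pathTree : ¬ (H.pathTree u).HasCycle := by
  refine not_hasCycle_of_rank _ List.length fun E hE F hF P hPE hPF ⟨R, hRE, hRP, hR⟩
    ⟨S, hSF, hSP, hS⟩ => ?_
  obtain ⟨q, e, -, -, -, -, rfl⟩ := mem_pathTree_edges.mp hE
  obtain ⟨q', e', -, -, -, -, rfl⟩ := mem_pathTree_edges.mp hF
  rw [eq_pathTreeEdge_dropLast hPE hRE hRP hR, eq_pathTreeEdge_dropLast hPF hSF hSP hS]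

end PathTree

end FinHypergraph

theorem pathTree_isHypertree_general {α : Type*} [DecidableEq α] [Fintype α]
    (H : FinHypergraph α) (k : ℕ) (hH : H.IsUniform k)
    (u : α) (hu : u ∈ H.verts) :
    (H.pathTree u).IsHypertree k :=
  ⟨FinHypergraph.pathTree_isUniform hH, FinHypergraph.pathTree_connected hu,
    FinHypergraph.not_hasCycle_pathTree⟩

/-- For a connected `k`-graph `H` and `u ∈ V(H)`, the path tree `T(H,u)` is a
`k`-uniform hypertree: connected and acyclic. -/
theorem pathTree_isHypertree {α : Type*} [DecidableEq α] [Fintype α]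
    (H : FinHypergraph α) (k : ℕ) (hk : 2 ≤ k) (hH : H.IsUniform k)
    (hconn : H.Connected) (u : α) (hu : u ∈ H.verts) :
    (H.pathTree u).IsHypertree k :=
  pathTree_isHypertree_general H k hH u hu
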